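/- For each i with 0 ≤ i ≤ m+n, the numerator polynomial identity holds: Σ_{i=0}^n ω_i p_i B_i^n(t) − (Σ_{i=0}^n ω_i B_i^n(t))(Σ_{j=0}^m q_j B_j^m(t)) = Σ_{i=0}^{m+n} [ Σ_{j=max(0,i−m)}^{min(n,i)} (C(n,j)C(m,i−j)/C(m+n,i)) ω_j (p_j − q_{i−j}) ] B_i^{m+n}(t). -/

import Mathlib

/-!
Since `∑ⱼ B_j^m = 1`, the left side is the double sum `∑ᵢ ∑ⱼ ω_i B_i^n B_j^m (p_i - q_j)`.
A product of Bernstein polynomials is a single one of degree `m + n`, namely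
`B_i^n B_j^m = C(n,i) C(m,j) / C(m+n,i+j) · B_{i+j}^{m+n}`, so collecting terms by `k = i + j`
gives the right side.
-/

open Finset

/-- The Bernstein basis polynomial `B_i^n(t) = C(n,i) t^i (1-t)^(n-i)`. -/
noncomputable def bern (n i : ℕ) (t : ℝ) : ℝ := (n.choose i : ℝ) * t ^ i * (1 - t) ^ (n - i)

theorem sum_bern_eq_one (n : ℕ) (t : ℝ) : ∑ i ∈ range (n + 1), bern n i t = 1 := by
  have h := add_pow t (1 - t) n
  rw [add_sub_cancel, one_pow] at h
  rw [h]
  exact sum_congr rfl fun i _ => by rw [bern]; ring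

theorem bern_mul_bern {m n j l : ℕ} (hj : j ≤ n) (hl : l ≤ m) (t : ℝ) :
    bern n j t * bern m l t
      = (n.choose j : ℝ) * m.choose l / (m + n).choose (j + l) * bern (m + n) (j + l) t := by
  have hc : ((m + n).choose (j + l) : ℝ) ≠ 0 := by
    exact_mod_cast (Nat.choose_pos (by omega)).ne'
  have hexp : m + n - (j + l) = (n - j) + (m - l) := by omega
  rw [bern, bern, bern, hexp, pow_add, pow_add, div_mul_eq_mul_div, eq_div_iff hc]
  ring

theorem sum_smul_sub_smul_sum {ι κ E : Type*} [AddCommGroup E] [Module ℝ E]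
    (s : Finset ι) (u : Finset κ) (a : ι → ℝ) (b : κ → ℝ) (p : ι → E) (q : κ → E)
    (hb : ∑ j ∈ u, b j = 1) :
    ∑ i ∈ s, a i • p i - (∑ i ∈ s, a i) • ∑ j ∈ u, b j • q j
      = ∑ i ∈ s, ∑ j ∈ u, (a i * b j) • (p i - q j) := by
  simp only [smul_sub, sum_sub_distrib, mul_smul, ← smul_sum, ← sum_smul, hb, one_smul]

theorem sum_range_sum_range_eq_sum_antidiagonal {M : Type*} [AddCommMonoid M]
    (m n : ℕ) (f : ℕ → ℕ → M) :
    ∑ i ∈ range (n + 1), ∑ j ∈ range (m + 1), f i j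
      = ∑ k ∈ range (m + n + 1), ∑ i ∈ Icc (k - m) (min n k), f i (k - i) := by
  rw [sum_sigma', sum_sigma']
  refine sum_nbij' (fun x => ⟨x.1 + x.2, x.1⟩) (fun x => ⟨x.2, x.1 - x.2⟩) ?_ ?_ ?_ ?_ ?_
  · rintro ⟨i, j⟩ h
    simp only [mem_sigma, mem_range, mem_Icc, le_min_iff] at h ⊢
    omega
  · rintro ⟨k, i⟩ h
    simp only [mem_sigma, mem_range, mem_Icc, le_min_iff] at h ⊢
    omega
  · rintro ⟨i, j⟩ -
    simp
  · rintro ⟨k, i⟩ h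
    simp only [mem_sigma, mem_range, mem_Icc, le_min_iff] at h
    simp [show i + (k - i) = k by omega]
  · rintro ⟨i, j⟩ -
    simp

theorem numerator_identity (d m n : ℕ) (ω : ℕ → ℝ)
    (p q : ℕ → EuclideanSpace ℝ (Fin d)) (t : ℝ) :
    (∑ i ∈ range (n + 1), (ω i * bern n i t) • p i)
      - (∑ i ∈ range (n + 1), ω i * bern n i t) • (∑ j ∈ range (m + 1), bern m j t • q j)
      = ∑ i ∈ range (m + n + 1), bern (m + n) i t •
          ∑ j ∈ Finset.Icc (i - m) (min n i),
            ((n.choose j : ℝ) * (m.choose (i - j)) / ((m + n).choose i) * ω j)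
              • (p j - q (i - j)) := by
  rw [sum_smul_sub_smul_sum _ _ _ _ _ _ (sum_bern_eq_one m t),
    sum_range_sum_range_eq_sum_antidiagonal]
  refine sum_congr rfl fun k hk => ?_
  rw [smul_sum]
  refine sum_congr rfl fun j hj => ?_
  simp only [mem_range, mem_Icc, le_min_iff] at hk hj
  have hjk : j + (k - j) = k := by omega
  rw [smul_smul, mul_assoc, bern_mul_bern (by omega) (by omega), hjk]
  congr 1
  ring
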